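/- ∫₀¹ u dH̃(u) = 1, where H̃(s) = −(Φ⁻¹(s/2))². -/

import Mathlib

open Real MeasureTheory Filter Set
open scoped Topology

noncomputable def stdPdf (v : ℝ) : ℝ := (Real.sqrt (2 * Real.pi))⁻¹ * Real.exp (-(v ^ 2) / 2)
noncomputable def stdCdf (v : ℝ) : ℝ := ∫ t in Set.Iic v, stdPdf t
noncomputable def stdQuantile : ℝ → ℝ := Function.invFun stdCdf
noncomputable def Htilde (s : ℝ) : ℝ := -(stdQuantile (s / 2)) ^ 2

lemma stdPdf_pos (v : ℝ) : 0 < stdPdf v := by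
  unfold stdPdf
  have h : (0:ℝ) < Real.sqrt (2 * Real.pi) := Real.sqrt_pos.mpr (by positivity)
  positivity

lemma continuous_stdPdf : Continuous stdPdf := by
  unfold stdPdf; fun_prop

lemma stdPdf_eq (v : ℝ) : stdPdf v = (Real.sqrt (2 * Real.pi))⁻¹ * Real.exp (-(1/2 * v ^ 2)) := by
  unfold stdPdf; ring_nf

lemma stdPdf_neg (v : ℝ) : stdPdf (-v) = stdPdf v := by
  unfold stdPdf; rw [neg_sq]

lemma integrable_stdPdf : Integrable stdPdf := by
  have h := (integrable_exp_neg_mul_sq (by norm_num : (0:ℝ) < 1/2)).const_mul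
    ((Real.sqrt (2 * Real.pi))⁻¹)
  refine h.congr (Filter.Eventually.of_forall fun v => ?_)
  simp only [stdPdf_eq]; ring_nf

lemma integrable_id_mul_stdPdf : Integrable (fun t => t * stdPdf t) := by
  have h := (integrable_mul_exp_neg_mul_sq (by norm_num : (0:ℝ) < 1/2)).const_mul
    ((Real.sqrt (2 * Real.pi))⁻¹)
  refine h.congr (Filter.Eventually.of_forall fun v => ?_)
  simp only [stdPdf_eq]; ring_nf

lemma integral_stdPdf : ∫ v, stdPdf v = 1 := by
  have h1 : ∫ v, stdPdf v = (Real.sqrt (2 * Real.pi))⁻¹ * ∫ v : ℝ, Real.exp (-(1/2) * v ^ 2) := by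
    rw [← integral_const_mul]
    congr 1; funext v; rw [stdPdf_eq]; ring_nf
  rw [h1, integral_gaussian]
  rw [show Real.pi / (1/2) = 2 * Real.pi by ring]
  exact inv_mul_cancel₀ (Real.sqrt_pos.mpr (by positivity)).ne'

lemma stdCdf_eq_add (x : ℝ) : stdCdf x = stdCdf 0 + ∫ t in (0:ℝ)..x, stdPdf t := by
  have h := intervalIntegral.integral_Iic_sub_Iic (integrable_stdPdf.integrableOn)
    (integrable_stdPdf.integrableOn) (a := (0:ℝ)) (b := x)
  unfold stdCdf; linarith

lemma hasDerivAt_stdCdf (v : ℝ) : HasDerivAt stdCdf (stdPdf v) v := by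
  have key : stdCdf = fun x => stdCdf 0 + ∫ t in (0:ℝ)..x, stdPdf t := funext stdCdf_eq_add
  rw [key]
  exact (intervalIntegral.integral_hasDerivAt_right
    (integrable_stdPdf.intervalIntegrable)
    (continuous_stdPdf.stronglyMeasurable.stronglyMeasurableAtFilter)
    continuous_stdPdf.continuousAt).const_add _

lemma continuous_stdCdf : Continuous stdCdf :=
  continuous_iff_continuousAt.mpr fun v => (hasDerivAt_stdCdf v).continuousAt

lemma stdCdf_strictMono : StrictMono stdCdf := by
  intro a b hab
  have h := intervalIntegral.integral_Iic_sub_Iic (integrable_stdPdf.integrableOn)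
    (integrable_stdPdf.integrableOn) (a := a) (b := b)
  have h2 : 0 < ∫ t in a..b, stdPdf t :=
    intervalIntegral.intervalIntegral_pos_of_pos (integrable_stdPdf.intervalIntegrable)
      stdPdf_pos hab
  unfold stdCdf; linarith

lemma tendsto_stdCdf_atTop : Tendsto stdCdf atTop (𝓝 1) := by
  have h := MeasureTheory.intervalIntegral_tendsto_integral_Ioi (0:ℝ)
    (integrable_stdPdf.integrableOn) (l := atTop) tendsto_id
  have key : stdCdf = fun x => stdCdf 0 + ∫ t in (0:ℝ)..x, stdPdf t := funext stdCdf_eq_add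
  rw [key]
  have h2 : stdCdf 0 + ∫ t in Ioi (0:ℝ), stdPdf t = 1 := by
    unfold stdCdf
    rw [intervalIntegral.integral_Iic_add_Ioi (integrable_stdPdf.integrableOn)
      (integrable_stdPdf.integrableOn)]
    exact integral_stdPdf
  rw [← h2]
  exact tendsto_const_nhds.add h

lemma tendsto_stdCdf_atBot : Tendsto stdCdf atBot (𝓝 0) := by
  have h := MeasureTheory.intervalIntegral_tendsto_integral_Iic (0:ℝ)
    (integrable_stdPdf.integrableOn) (l := atBot) tendsto_id
  have key : ∀ x, stdCdf x = stdCdf 0 - ∫ t in x..(0:ℝ), stdPdf t := by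
    intro x
    have h0 := stdCdf_eq_add x
    have h1 := intervalIntegral.integral_symm (a := 0) (b := x) (f := stdPdf) (μ := volume)
    linarith
  have h2 : Tendsto (fun x => stdCdf 0 - ∫ t in x..(0:ℝ), stdPdf t) atBot (𝓝 (stdCdf 0 - stdCdf 0)) :=
    tendsto_const_nhds.sub h
  rw [sub_self] at h2
  exact h2.congr (fun x => (key x).symm)

lemma stdCdf_nonneg (v : ℝ) : 0 ≤ stdCdf v :=
  setIntegral_nonneg measurableSet_Iic fun t _ => (stdPdf_pos t).le

lemma stdCdf_le_one (v : ℝ) : stdCdf v ≤ 1 := by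
  have h := intervalIntegral.integral_Iic_add_Ioi (b := v) (integrable_stdPdf.integrableOn)
    (integrable_stdPdf.integrableOn)
  rw [integral_stdPdf] at h
  have h2 : 0 ≤ ∫ t in Ioi v, stdPdf t :=
    setIntegral_nonneg measurableSet_Ioi fun t _ => (stdPdf_pos t).le
  unfold stdCdf; linarith

lemma stdCdf_mem_Ioo (v : ℝ) : stdCdf v ∈ Ioo (0:ℝ) 1 := by
  constructor
  · have h0 := stdCdf_nonneg (v - 1)
    have := stdCdf_strictMono (show v - 1 < v by linarith)
    linarith
  · have h1 := stdCdf_le_one (v + 1)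
    have := stdCdf_strictMono (show v < v + 1 by linarith)
    linarith

lemma exists_stdCdf_eq {y : ℝ} (hy : y ∈ Ioo (0:ℝ) 1) : ∃ v, stdCdf v = y := by
  obtain ⟨a, ha⟩ : ∃ a, stdCdf a < y := (tendsto_stdCdf_atBot.eventually_lt_const hy.1).exists
  obtain ⟨b, hb⟩ : ∃ b, y < stdCdf b := (tendsto_stdCdf_atTop.eventually_const_lt hy.2).exists
  have hab : a ≤ b := (stdCdf_strictMono.lt_iff_lt.mp (ha.trans hb)).le
  obtain ⟨v, _, hv⟩ := intermediate_value_Icc hab continuous_stdCdf.continuousOn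
    ⟨ha.le, hb.le⟩
  exact ⟨v, hv⟩

lemma stdQuantile_stdCdf (v : ℝ) : stdQuantile (stdCdf v) = v :=
  Function.leftInverse_invFun stdCdf_strictMono.injective v

lemma stdCdf_stdQuantile {y : ℝ} (hy : y ∈ Ioo (0:ℝ) 1) : stdCdf (stdQuantile y) = y :=
  Function.invFun_eq (exists_stdCdf_eq hy)

lemma stdCdf_zero : stdCdf 0 = 1/2 := by
  have h1 : stdCdf 0 = ∫ t in Ioi (0:ℝ), stdPdf t := by
    unfold stdCdf
    rw [show (Ioi (0:ℝ)) = Ioi (-(0:ℝ)) by norm_num, ← integral_comp_neg_Iic (0:ℝ) stdPdf]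
    congr 1; funext t; rw [stdPdf_neg]
  have h2 : stdCdf 0 + ∫ t in Ioi (0:ℝ), stdPdf t = 1 := by
    unfold stdCdf
    rw [intervalIntegral.integral_Iic_add_Ioi (integrable_stdPdf.integrableOn)
      (integrable_stdPdf.integrableOn)]
    exact integral_stdPdf
  linarith

lemma stdQuantile_half : stdQuantile (1/2) = 0 := by
  rw [← stdCdf_zero, stdQuantile_stdCdf]

lemma continuousAt_stdQuantile {y : ℝ} (hy : y ∈ Ioo (0:ℝ) 1) : ContinuousAt stdQuantile y := by
  rw [Metric.continuousAt_iff]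
  intro ε hε
  set v := stdQuantile y with hvdef
  have hv : stdCdf v = y := stdCdf_stdQuantile hy
  have h1 : stdCdf (v - ε) < y := by rw [← hv]; exact stdCdf_strictMono (by linarith)
  have h2 : y < stdCdf (v + ε) := by rw [← hv]; exact stdCdf_strictMono (by linarith)
  refine ⟨min (y - stdCdf (v - ε)) (stdCdf (v + ε) - y), by simp [lt_min_iff]; constructor <;> linarith, ?_⟩
  intro z hz
  rw [Real.dist_eq] at hz ⊢
  rw [abs_lt] at hz
  have hzl : stdCdf (v - ε) < z := by
    have := min_le_left (y - stdCdf (v - ε)) (stdCdf (v + ε) - y); linarith [hz.1]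
  have hzr : z < stdCdf (v + ε) := by
    have := min_le_right (y - stdCdf (v - ε)) (stdCdf (v + ε) - y); linarith [hz.2]
  have hz0 : z ∈ Ioo (0:ℝ) 1 :=
    ⟨(stdCdf_mem_Ioo (v - ε)).1.trans hzl, hzr.trans_le (stdCdf_mem_Ioo (v + ε)).2.le⟩
  have hcz : stdCdf (stdQuantile z) = z := stdCdf_stdQuantile hz0
  have hql : v - ε < stdQuantile z := by
    by_contra h
    push_neg at h
    have := stdCdf_strictMono.monotone h
    rw [hcz] at this; linarith
  have hqr : stdQuantile z < v + ε := by
    by_contra h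
    push_neg at h
    have := stdCdf_strictMono.monotone h
    rw [hcz] at this; linarith
  rw [abs_lt]
  constructor <;> [linarith; linarith]

lemma hasDerivAt_stdQuantile {y : ℝ} (hy : y ∈ Ioo (0:ℝ) 1) :
    HasDerivAt stdQuantile (stdPdf (stdQuantile y))⁻¹ y := by
  apply HasDerivAt.of_local_left_inverse (continuousAt_stdQuantile hy)
    (hasDerivAt_stdCdf _) (stdPdf_pos _).ne'
  filter_upwards [Ioo_mem_nhds hy.1 hy.2] with z hz
  exact stdCdf_stdQuantile hz

lemma hasDerivAt_stdPdf (v : ℝ) : HasDerivAt stdPdf (-v * stdPdf v) v := by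
  have h : HasDerivAt (fun x : ℝ => -(x ^ 2) / 2) (-v) v := by
    have := ((hasDerivAt_pow 2 v).neg.div_const 2)
    exact this.congr_deriv (by simp; ring)
  have h2 := (h.exp).const_mul ((Real.sqrt (2 * Real.pi))⁻¹)
  have h3 : HasDerivAt stdPdf ((Real.sqrt (2 * Real.pi))⁻¹ * (Real.exp (-(v ^ 2) / 2) * -v)) v := h2
  convert h3 using 1
  unfold stdPdf; ring

lemma tendsto_stdPdf_atBot : Tendsto stdPdf atBot (𝓝 0) := by
  have hsq : Tendsto (fun x : ℝ => x ^ 2) atBot atTop := by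
    have h0 : Tendsto (fun x : ℝ => x ^ 2) atTop atTop :=
      tendsto_pow_atTop (by norm_num)
    have := h0.comp tendsto_neg_atBot_atTop
    exact this.congr (fun x => by simp [Function.comp, neg_pow])
  have h1 : Tendsto (fun x : ℝ => -(x ^ 2) / 2) atBot atBot :=
    Tendsto.atBot_div_const (by norm_num : (0:ℝ) < 2) (tendsto_neg_atTop_atBot.comp hsq)
  have h2 := Real.tendsto_exp_atBot.comp h1
  have h3 := h2.const_mul ((Real.sqrt (2 * Real.pi))⁻¹)
  rw [mul_zero] at h3
  exact h3.congr (fun x => rfl)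

lemma integral_id_mul_stdPdf (v : ℝ) : ∫ t in Iic v, t * stdPdf t = -stdPdf v := by
  have h := MeasureTheory.integral_Iic_of_hasDerivAt_of_tendsto'
    (f := fun t => -stdPdf t) (f' := fun t => t * stdPdf t) (a := v) (m := 0)
    (fun x _ => (hasDerivAt_stdPdf x).neg.congr_deriv (by ring))
    (integrable_id_mul_stdPdf.integrableOn)
    (by simpa using tendsto_stdPdf_atBot.neg)
  simpa using h

lemma mills {v : ℝ} (hv : v < 0) : stdCdf v * (-v) ≤ stdPdf v := by
  have hint : IntegrableOn (fun t => t / v * stdPdf t) (Iic v) := by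
    have := (integrable_id_mul_stdPdf.div_const v).integrableOn (s := Iic v)
    exact this.congr_fun (fun t _ => by ring) measurableSet_Iic
  have h1 : stdCdf v ≤ ∫ t in Iic v, t / v * stdPdf t := by
    apply MeasureTheory.setIntegral_mono_on integrable_stdPdf.integrableOn hint measurableSet_Iic
    intro t ht
    have htv : t ≤ v := ht
    have h : (1:ℝ) ≤ t / v := by
      rw [le_div_iff_of_neg hv]
      linarith
    nlinarith [stdPdf_pos t]
  have h2 : ∫ t in Iic v, t / v * stdPdf t = (∫ t in Iic v, t * stdPdf t) / v := by
    rw [← integral_div]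
    congr 1; funext t; ring
  rw [h2, integral_id_mul_stdPdf] at h1
  have h3 : -stdPdf v / v = stdPdf v / (-v) := by
    rw [div_neg, neg_div]
  rw [h3] at h1
  exact (le_div_iff₀ (by linarith : (0:ℝ) < -v)).mp h1

lemma half_mem {u : ℝ} (hu : u ∈ Ioo (0:ℝ) 1) : u / 2 ∈ Ioo (0:ℝ) 1 :=
  ⟨by linarith [hu.1], by linarith [hu.2]⟩

lemma q_neg {u : ℝ} (hu : u ∈ Ioo (0:ℝ) 1) : stdQuantile (u / 2) < 0 := by
  have h : stdCdf (stdQuantile (u / 2)) = u / 2 := stdCdf_stdQuantile (half_mem hu)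
  have h2 : stdCdf (stdQuantile (u / 2)) < stdCdf 0 := by
    rw [h, stdCdf_zero]; linarith [hu.2]
  exact stdCdf_strictMono.lt_iff_lt.mp h2

lemma hasDerivAt_q {u : ℝ} (hu : u ∈ Ioo (0:ℝ) 1) :
    HasDerivAt (fun s : ℝ => stdQuantile (s / 2))
      ((stdPdf (stdQuantile (u / 2)))⁻¹ * 2⁻¹) u := by
  have h := (hasDerivAt_stdQuantile (half_mem hu)).comp u ((hasDerivAt_id u).div_const 2)
  exact h.congr_deriv (by simp)

lemma hasDerivAt_Htilde {u : ℝ} (hu : u ∈ Ioo (0:ℝ) 1) :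
    HasDerivAt Htilde (-stdQuantile (u / 2) * (stdPdf (stdQuantile (u / 2)))⁻¹) u := by
  have h := ((hasDerivAt_q hu).pow 2).neg
  have h2 : HasDerivAt Htilde
      (-(2 * stdQuantile (u / 2) ^ 1 * ((stdPdf (stdQuantile (u / 2)))⁻¹ * 2⁻¹))) u := h
  convert h2 using 1
  ring

lemma deriv_Htilde {u : ℝ} (hu : u ∈ Ioo (0:ℝ) 1) :
    deriv Htilde u = -stdQuantile (u / 2) * (stdPdf (stdQuantile (u / 2)))⁻¹ :=
  (hasDerivAt_Htilde hu).deriv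

noncomputable def Fanti (u : ℝ) : ℝ :=
  -u * (stdQuantile (u / 2)) ^ 2 + u - 2 * stdQuantile (u / 2) * stdPdf (stdQuantile (u / 2))

lemma hasDerivAt_Fanti {u : ℝ} (hu : u ∈ Ioo (0:ℝ) 1) :
    HasDerivAt Fanti (u * deriv Htilde u) u := by
  set q := stdQuantile (u / 2) with hq
  have hu2 : stdCdf q = u / 2 := stdCdf_stdQuantile (half_mem hu)
  have hd := hasDerivAt_q hu
  have ha : HasDerivAt (fun s : ℝ => -s * (stdQuantile (s / 2)) ^ 2)
      (-1 * q ^ 2 + -u * (2 * q ^ 1 * ((stdPdf q)⁻¹ * 2⁻¹))) u :=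
    ((hasDerivAt_id u).neg.mul (hd.pow 2))
  have hb : HasDerivAt (fun s : ℝ => s) 1 u := hasDerivAt_id u
  have hpdf : HasDerivAt (fun s : ℝ => stdPdf (stdQuantile (s / 2)))
      (-q * stdPdf q * ((stdPdf q)⁻¹ * 2⁻¹)) u :=
      HasDerivAt.comp (h₂ := stdPdf) (h := fun s : ℝ => stdQuantile (s / 2)) u (hasDerivAt_stdPdf q) hd
  have hc : HasDerivAt (fun s : ℝ => 2 * stdQuantile (s / 2) * stdPdf (stdQuantile (s / 2)))
      ((2 * ((stdPdf q)⁻¹ * 2⁻¹)) * stdPdf q + (2 * q) * (-q * stdPdf q * ((stdPdf q)⁻¹ * 2⁻¹))) u := by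
    exact ((hd.const_mul 2).mul hpdf)
  have htot := (ha.add hb).sub hc
  have hFanti : Fanti = fun s : ℝ =>
      (-s * (stdQuantile (s / 2)) ^ 2 + s) - 2 * stdQuantile (s / 2) * stdPdf (stdQuantile (s / 2)) := by
    funext s; unfold Fanti; ring
  rw [hFanti]
  refine htot.congr_deriv ?_
  rw [deriv_Htilde hu, ← hq]
  have hne : stdPdf q ≠ 0 := (stdPdf_pos q).ne'
  field_simp
  ring

lemma tendsto_mul_stdPdf_atTop : Tendsto (fun t => t * stdPdf t) atTop (𝓝 0) := by
  have hg : Tendsto (fun t : ℝ => (Real.sqrt (2 * Real.pi))⁻¹ * (t ^ 1 * Real.exp (-t)))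
      atTop (𝓝 ((Real.sqrt (2 * Real.pi))⁻¹ * 0)) :=
    (tendsto_pow_mul_exp_neg_atTop_nhds_zero 1).const_mul _
  rw [mul_zero] at hg
  apply tendsto_of_tendsto_of_tendsto_of_le_of_le' tendsto_const_nhds hg
  · filter_upwards [eventually_ge_atTop (0:ℝ)] with t ht
    exact mul_nonneg ht (stdPdf_pos t).le
  · filter_upwards [eventually_ge_atTop (2:ℝ)] with t ht
    have hc : (0:ℝ) ≤ (Real.sqrt (2 * Real.pi))⁻¹ := by positivity
    have hexp : Real.exp (-(t ^ 2) / 2) ≤ Real.exp (-t) := by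
      apply Real.exp_le_exp.mpr; nlinarith
    unfold stdPdf
    have ht0 : (0:ℝ) ≤ t := by linarith
    calc t * ((Real.sqrt (2 * Real.pi))⁻¹ * Real.exp (-(t ^ 2) / 2))
        ≤ t * ((Real.sqrt (2 * Real.pi))⁻¹ * Real.exp (-t)) := by
          apply mul_le_mul_of_nonneg_left (mul_le_mul_of_nonneg_left hexp hc) ht0
      _ = (Real.sqrt (2 * Real.pi))⁻¹ * (t ^ 1 * Real.exp (-t)) := by ring

lemma tendsto_mul_stdPdf_atBot : Tendsto (fun t => t * stdPdf t) atBot (𝓝 0) := by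
  have h := (tendsto_mul_stdPdf_atTop.comp tendsto_neg_atBot_atTop).neg
  rw [neg_zero] at h
  apply h.congr
  intro t
  simp [Function.comp, stdPdf_neg]

lemma tendsto_sq_mul_stdCdf_atBot : Tendsto (fun v => v ^ 2 * stdCdf v) atBot (𝓝 0) := by
  have hg := tendsto_mul_stdPdf_atBot.neg
  rw [neg_zero] at hg
  apply tendsto_of_tendsto_of_tendsto_of_le_of_le' tendsto_const_nhds hg
  · filter_upwards with v
    exact mul_nonneg (sq_nonneg v) (stdCdf_nonneg v)
  · filter_upwards [eventually_lt_atBot (0:ℝ)] with v hv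
    have hm := mills hv
    nlinarith

lemma tendsto_q_atBot : Tendsto (fun u => stdQuantile (u / 2)) (𝓝[>] (0:ℝ)) atBot := by
  rw [tendsto_atBot]
  intro b
  have hb : 0 < stdCdf b := (stdCdf_mem_Ioo b).1
  have hmem : Ioo (0:ℝ) (min 1 (2 * stdCdf b)) ∈ 𝓝[>] (0:ℝ) :=
    Ioo_mem_nhdsGT_of_mem ⟨le_refl 0, by positivity⟩
  filter_upwards [hmem] with u hu
  have hu1 : u ∈ Ioo (0:ℝ) 1 := ⟨hu.1, lt_of_lt_of_le hu.2 (min_le_left _ _)⟩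
  have h2 : stdCdf (stdQuantile (u / 2)) = u / 2 := stdCdf_stdQuantile (half_mem hu1)
  have h3 : u / 2 < stdCdf b := by
    have := lt_of_lt_of_le hu.2 (min_le_right _ _); linarith
  have h4 : stdCdf (stdQuantile (u / 2)) < stdCdf b := by rw [h2]; exact h3
  exact (stdCdf_strictMono.lt_iff_lt.mp h4).le

lemma tendsto_Fanti_zero : Tendsto Fanti (𝓝[>] (0:ℝ)) (𝓝 0) := by
  set G : ℝ → ℝ := fun v => -2 * (v ^ 2 * stdCdf v) + 2 * stdCdf v - 2 * (v * stdPdf v) with hG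
  have hGt : Tendsto G atBot (𝓝 0) := by
    have h := ((tendsto_sq_mul_stdCdf_atBot.const_mul (-2)).add
      (tendsto_stdCdf_atBot.const_mul 2)).sub (tendsto_mul_stdPdf_atBot.const_mul 2)
    have hval : (-2:ℝ) * 0 + 2 * 0 - 2 * 0 = 0 := by norm_num
    rw [hval] at h
    exact h
  have hcomp := hGt.comp tendsto_q_atBot
  apply hcomp.congr'
  filter_upwards [Ioo_mem_nhdsGT_of_mem (show (0:ℝ) ∈ Ico (0:ℝ) 1 by constructor <;> norm_num)]
    with u hu
  have h2 : stdCdf (stdQuantile (u / 2)) = u / 2 := stdCdf_stdQuantile (half_mem hu)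
  simp only [Function.comp, hG, h2]
  unfold Fanti
  ring

lemma tendsto_Fanti_one : Tendsto Fanti (𝓝[<] (1:ℝ)) (𝓝 1) := by
  have hhalf : (1:ℝ)/2 ∈ Ioo (0:ℝ) 1 := by norm_num
  have hcq : ContinuousAt (fun u : ℝ => stdQuantile (u / 2)) 1 := by
    have h1 : ContinuousAt (fun u : ℝ => u / 2) 1 := by fun_prop
    have h2 : ContinuousAt stdQuantile ((1:ℝ) / 2) := continuousAt_stdQuantile hhalf
    exact ContinuousAt.comp (g := stdQuantile) h2 h1
  have hF : ContinuousAt Fanti 1 := by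
    unfold Fanti
    exact ((continuousAt_id.neg.mul (hcq.pow 2)).add continuousAt_id).sub
      ((hcq.const_mul 2).mul (continuous_stdPdf.continuousAt.comp hcq))
  have h := hF.continuousWithinAt.tendsto (s := Iio 1)
  have hF1 : Fanti 1 = 1 := by
    unfold Fanti
    rw [stdQuantile_half]
    norm_num
  rwa [hF1] at h

lemma integrand_mem {u : ℝ} (hu : u ∈ Ioo (0:ℝ) 1) :
    u * deriv Htilde u ∈ Icc (0:ℝ) 2 := by
  rw [deriv_Htilde hu]
  set q := stdQuantile (u / 2) with hqdef
  have hq2 : stdCdf q = u / 2 := stdCdf_stdQuantile (half_mem hu)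
  have hqneg : q < 0 := q_neg hu
  have hφ : 0 < stdPdf q := stdPdf_pos q
  have hm : stdCdf q * (-q) ≤ stdPdf q := mills hqneg
  have hinv : 0 < (stdPdf q)⁻¹ := inv_pos.mpr hφ
  have hcan : stdPdf q * (stdPdf q)⁻¹ = 1 := mul_inv_cancel₀ hφ.ne'
  constructor
  · exact le_of_lt (mul_pos hu.1 (mul_pos (neg_pos.mpr hqneg) hinv))
  · have hu2 : u = 2 * stdCdf q := by rw [hq2]; ring
    rw [hu2]
    nlinarith

lemma intervalIntegrable_integrand :
    IntervalIntegrable (fun u => u * deriv Htilde u) volume 0 1 := by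
  rw [intervalIntegrable_iff_integrableOn_Ioc_of_le zero_le_one,
    integrableOn_Ioc_iff_integrableOn_Ioo]
  have hconst : IntegrableOn (fun _ : ℝ => (2:ℝ)) (Ioo (0:ℝ) 1) volume :=
    integrableOn_const measure_Ioo_lt_top.ne
  apply Integrable.mono' hconst
  · exact ((measurable_id.mul (measurable_deriv Htilde)).aestronglyMeasurable)
  · rw [ae_restrict_iff' measurableSet_Ioo]
    refine ae_of_all _ fun u hu => ?_
    rw [Real.norm_eq_abs, abs_le]
    obtain ⟨h1, h2⟩ := integrand_mem hu
    exact ⟨by linarith, h2⟩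

theorem integral_u_dHtilde_one :
    (∫ u in (0 : ℝ)..1, u * deriv Htilde u) = 1 := by
  have h := intervalIntegral.integral_eq_sub_of_hasDerivAt_of_tendsto (f := Fanti)
    (f' := fun u => u * deriv Htilde u) zero_lt_one (fun x hx => hasDerivAt_Fanti hx)
    intervalIntegrable_integrand tendsto_Fanti_zero tendsto_Fanti_one
  rw [h]
  norm_num
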